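/- For every derivation d of B(q) of degree α, there exists i ∈ ℤ_{≥0} such that d(B^{[j]}) ⊆ B^{[i+j]} for all j ∈ ℤ_{≥0}. -/

import Mathlib

variable {B : Type} [LieRing B] [LieAlgebra ℂ B]

/-- The homogeneous component `B_α = span{L_{α,i} : i ∈ ℤ_{≥0}}` of the grading of the
Block type Lie algebra. -/
def blockGrade (L : Module.Basis (ℤ × ℕ) ℂ B) (α : ℤ) : Submodule ℂ B :=
  Submodule.span ℂ (Set.range fun i : ℕ => L (α, i))

/-- The subspace `B^{[j]} = span{L_{β,k} : β ∈ ℤ, 0 ≤ k ≤ j}` (which is `0` for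
`j < 0`). -/
def blockFilt (L : Module.Basis (ℤ × ℕ) ℂ B) (j : ℤ) : Submodule ℂ B :=
  Submodule.span ℂ {x | ∃ (β : ℤ) (k : ℕ), (k : ℤ) ≤ j ∧ x = L (β, k)}

/-- A linear map `d` has degree `α` if `d ≠ 0` and `d(B_β) ⊆ B_{α+β}` for all `β`. -/
def HasDegree (L : Module.Basis (ℤ × ℕ) ℂ B) (d : B →ₗ[ℂ] B) (α : ℤ) : Prop :=
  d ≠ 0 ∧ ∀ β : ℤ, (blockGrade L β).map d ≤ blockGrade L (α + β)

/-! The filtration is exhaustive and satisfies `[B^{[m]}, B^{[n]}] ⊆ B^{[m+n]}`, so if `d`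
raises the filtration index by at most `N` on `L_a` and on `L_b`, it does so on `L_c` whenever
`[L_a, L_b]` is a nonzero multiple of `L_c`. Choosing `N` for the six elements `L_{0,0}`,
`L_{±1,0}`, `L_{±2,0}`, `L_{0,1}`, brackets with `L_{±1,0}` reach every `L_{β,0}`; then brackets
with `L_{0,1}` (for `β ≠ 0`) and of `L_{-1,0}` with `L_{1,k+1}` (for `β = 0`) climb from row `k`
to row `k+1`. The nonvanishing of the structure constants along the way is where `q > 0`
enters. -/

def IsBlockBasis (q : ℕ) (L : Module.Basis (ℤ × ℕ) ℂ B) : Prop :=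
  ∀ (α β : ℤ) (i j : ℕ),
    ⁅L (α, i), L (β, j)⁆ = (((β * ((i : ℤ) + q) - α * ((j : ℤ) + q)) : ℤ) : ℂ) • L (α + β, i + j)

section Filtration

variable (L : Module.Basis (ℤ × ℕ) ℂ B)

lemma blockFilt_mono : Monotone (blockFilt L) := fun _ _ h =>
  Submodule.span_mono fun _ ⟨β, k, hk, hx⟩ => ⟨β, k, hk.trans h, hx⟩

lemma basis_mem_blockFilt {j : ℤ} (p : ℤ × ℕ) (h : (p.2 : ℤ) ≤ j) : L p ∈ blockFilt L j :=
  Submodule.subset_span ⟨p.1, p.2, h, rfl⟩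

lemma exists_mem_blockFilt (x : B) : ∃ n : ℕ, x ∈ blockFilt L n := by
  refine ⟨((L.repr x).support.image Prod.snd).sup id, ?_⟩
  refine Submodule.span_le.2 ?_ (L.mem_span_repr_support x)
  rintro _ ⟨p, hp, rfl⟩
  exact basis_mem_blockFilt L p
    (by exact_mod_cast Finset.le_sup (f := id) (Finset.mem_image_of_mem Prod.snd hp))

lemma eventually_mem_blockFilt (x : B) : ∀ᶠ n : ℕ in Filter.atTop, x ∈ blockFilt L n := by
  obtain ⟨n, hn⟩ := exists_mem_blockFilt L x
  exact Filter.eventually_atTop.2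
    ⟨n, fun m hm => blockFilt_mono L (by exact_mod_cast hm) hn⟩

lemma lie_mem_blockFilt {q : ℕ} (hL : IsBlockBasis q L) {m n : ℤ} {x y : B}
    (hx : x ∈ blockFilt L m) (hy : y ∈ blockFilt L n) : ⁅x, y⁆ ∈ blockFilt L (m + n) := by
  have h : Submodule.map₂ (LieModule.toEnd ℂ B B : B →ₗ[ℂ] Module.End ℂ B)
      (blockFilt L m) (blockFilt L n) ≤ blockFilt L (m + n) := by
    rw [blockFilt, blockFilt, Submodule.map₂_span_span, Submodule.span_le]
    rintro _ ⟨_, ⟨β, k, hk, rfl⟩, _, ⟨γ, l, hl, rfl⟩, rfl⟩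
    simp only [LieHom.coe_toLinearMap, LieModule.toEnd_apply_apply, SetLike.mem_coe]
    rw [hL]
    exact Submodule.smul_mem _ _ (basis_mem_blockFilt L _ (by push_cast; omega))
  simpa using Submodule.map₂_le.1 h x hx y hy

end Filtration

section Derivation

variable {q : ℕ} {L : Module.Basis (ℤ × ℕ) ℂ B} (hL : IsBlockBasis q L) {d : B →ₗ[ℂ] B}
  (hd : ∀ x y : B, d ⁅x, y⁆ = ⁅d x, y⁆ + ⁅x, d y⁆) {N : ℤ}

variable (L d N) in
def ShiftsFiltBy (p : ℤ × ℕ) : Prop :=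
  d (L p) ∈ blockFilt L (N + p.2)

lemma shiftsFiltBy_of_mem {n : ℕ} {p : ℤ × ℕ} (h : d (L p) ∈ blockFilt L n) :
    ShiftsFiltBy L d n p :=
  blockFilt_mono L (by omega) h

lemma map_blockFilt_le_of_forall_shiftsFiltBy (h : ∀ p, ShiftsFiltBy L d N p) (j : ℤ) :
    (blockFilt L j).map d ≤ blockFilt L (N + j) := by
  rw [blockFilt, Submodule.map_span, Submodule.span_le]
  rintro _ ⟨_, ⟨β, k, hk, rfl⟩, rfl⟩
  exact blockFilt_mono L (by omega) (h (β, k))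

include hL hd

lemma ShiftsFiltBy.lie {α β : ℤ} {i j : ℕ} (hz : β * ((i : ℤ) + q) - α * ((j : ℤ) + q) ≠ 0)
    (ha : ShiftsFiltBy L d N (α, i)) (hb : ShiftsFiltBy L d N (β, j)) :
    ShiftsFiltBy L d N (α + β, i + j) := by
  have hz' : ((β * ((i : ℤ) + q) - α * ((j : ℤ) + q) : ℤ) : ℂ) ≠ 0 := Int.cast_ne_zero.2 hz
  have hc : L (α + β, i + j) =
      ((β * ((i : ℤ) + q) - α * ((j : ℤ) + q) : ℤ) : ℂ)⁻¹ • ⁅L (α, i), L (β, j)⁆ := by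
    rw [hL, smul_smul, inv_mul_cancel₀ hz', one_smul]
  have hLa := basis_mem_blockFilt L (α, i) le_rfl
  have hLb := basis_mem_blockFilt L (β, j) le_rfl
  unfold ShiftsFiltBy at *
  rw [hc, map_smul, hd]
  refine Submodule.smul_mem _ _ (Submodule.add_mem _ ?_ ?_)
  · exact blockFilt_mono L (by push_cast; omega) (lie_mem_blockFilt L hL ha hLb)
  · exact blockFilt_mono L (by push_cast; omega) (lie_mem_blockFilt L hL hLa hb)

lemma shiftsFiltBy_row_zero (hq : 0 < q) (hm2 : ShiftsFiltBy L d N (-2, 0))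
    (hm1 : ShiftsFiltBy L d N (-1, 0)) (h0 : ShiftsFiltBy L d N (0, 0))
    (h1 : ShiftsFiltBy L d N (1, 0)) (h2 : ShiftsFiltBy L d N (2, 0)) (β : ℤ) :
    ShiftsFiltBy L d N (β, 0) := by
  have hq' : (q : ℤ) ≠ 0 := by exact_mod_cast hq.ne'
  rcases le_or_gt 2 β with hβ | hβ
  · induction β, hβ using Int.leInduction with
    | base => exact h2
    | succ β hβ ih =>
      refine ShiftsFiltBy.lie hL hd (i := 0) (j := 0) ?_ ih h1
      push_cast
      exact fun h => hq' (by nlinarith)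
  rcases le_or_gt β (-2) with hβ' | hβ'
  · induction β, hβ' using Int.leInductionDown with
    | base => exact hm2
    | pred β hβ ih =>
      refine ShiftsFiltBy.lie hL hd (i := 0) (j := 0) ?_ (ih (by omega)) hm1
      push_cast
      exact fun h => hq' (by nlinarith)
  interval_cases β
  exacts [hm1, h0, h1]

lemma shiftsFiltBy_succ_row (h01 : ShiftsFiltBy L d N (0, 1))
    (hm1 : ShiftsFiltBy L d N (-1, 0)) {k : ℕ} (hk : ∀ β, ShiftsFiltBy L d N (β, k)) (β : ℤ) :
    ShiftsFiltBy L d N (β, k + 1) := by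
  have hne : ∀ β : ℤ, β ≠ 0 → ShiftsFiltBy L d N (β, k + 1) := fun β hβ => by
    simpa [add_comm 1 k] using ShiftsFiltBy.lie hL hd (α := 0) (i := 1)
      (by simpa using mul_ne_zero hβ (by omega : (1 : ℤ) + q ≠ 0)) h01 (hk β)
  rcases eq_or_ne β 0 with rfl | hβ
  · simpa using ShiftsFiltBy.lie hL hd (i := 0) (by push_cast; omega) hm1 (hne 1 one_ne_zero)
  · exact hne β hβ

end Derivation

theorem block_derivation_filtration_shift_general (q : ℕ) (hq : 0 < q)
    (L : Module.Basis (ℤ × ℕ) ℂ B)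
    (hL : ∀ (α β : ℤ) (i j : ℕ),
      ⁅L (α, i), L (β, j)⁆ =
        (((β * ((i : ℤ) + q) - α * ((j : ℤ) + q)) : ℤ) : ℂ) • L (α + β, i + j))
    (d : B →ₗ[ℂ] B) (hd : ∀ x y : B, d ⁅x, y⁆ = ⁅d x, y⁆ + ⁅x, d y⁆)
    (α : ℤ) :
    ∃ i : ℕ, ∀ j : ℕ, (blockFilt L j).map d ≤ blockFilt L ((i : ℤ) + j) := by
  obtain ⟨N, hN⟩ := ((Filter.eventually_all_finset
    ({(-2, 0), (-1, 0), (0, 0), (1, 0), (2, 0), (0, 1)} : Finset (ℤ × ℕ))).2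
    fun p _ => eventually_mem_blockFilt L (d (L p))).exists
  have hgen := fun p hp => shiftsFiltBy_of_mem (d := d) (hN p hp)
  have hrow0 := shiftsFiltBy_row_zero hL hd hq (hgen _ (by simp)) (hgen _ (by simp))
    (hgen _ (by simp)) (hgen _ (by simp)) (hgen _ (by simp))
  have hall : ∀ p : ℤ × ℕ, ShiftsFiltBy L d N p := fun ⟨β, k⟩ => by
    induction k generalizing β with
    | zero => exact hrow0 β
    | succ k ih => exact shiftsFiltBy_succ_row hL hd (hgen _ (by simp)) (hrow0 (-1)) ih β
  exact ⟨N, fun j => map_blockFilt_le_of_forall_shiftsFiltBy hall j⟩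

/-- For every derivation `d` of the Block type Lie algebra `B(q)` of degree `α`,
there exists `i ∈ ℤ_{≥0}` such that `d(B^{[j]}) ⊆ B^{[i+j]}` for all
`j ∈ ℤ_{≥0}`. -/
theorem block_derivation_filtration_shift (q : ℕ) (hq : 0 < q)
    (L : Module.Basis (ℤ × ℕ) ℂ B)
    (hL : ∀ (α β : ℤ) (i j : ℕ),
      ⁅L (α, i), L (β, j)⁆ =
        (((β * ((i : ℤ) + q) - α * ((j : ℤ) + q)) : ℤ) : ℂ) • L (α + β, i + j))
    (d : B →ₗ[ℂ] B) (hd : ∀ x y : B, d ⁅x, y⁆ = ⁅d x, y⁆ + ⁅x, d y⁆)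
    (α : ℤ) (hdeg : HasDegree L d α) :
    ∃ i : ℕ, ∀ j : ℕ, (blockFilt L j).map d ≤ blockFilt L ((i : ℤ) + j) :=
  block_derivation_filtration_shift_general q hq L hL d hd α
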